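/- Let d be an integer with 3 ≤ d ≤ 6, let h be a real number with 0 < h < π/2, and let v_1, …, v_d be unit vectors in ℝ^d. Suppose that the d congruent zones Z(v_1,h), …, Z(v_d,h) cover S^{d-1}, i.e. S^{d-1} = ⋃_{i=1}^d Z(v_i,h), and that every point of S^{d-1} belongs to the interior of at most d − 1 of these zones. Then the d zones are pairwise orthogonal, i.e. ⟨v_i, v_j⟩ = 0 for all i ≠ j. -/

import Mathlib

/-!
Every unit vector `x` satisfies `min_i |⟪x, v i⟫| ≤ sin h ≤ max_i |⟪x, v i⟫|`: the lower bound is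
the covering, the upper bound the multiplicity condition. The upper bound forces the `v i` to span,
so they form a basis; let `w` be the dual basis. For every choice of signs, `y = ∑ ± w l` has
`|⟪y, v i⟫| = 1` for all `i`, so `y / ‖y‖` has all `|⟪·, v i⟫|` equal and both bounds give
`‖y‖ = 1 / sin h`. Flipping the signs at `j`, at `k`, and at both, and expanding the four equal
norms, gives `⟪w j, w k⟫ = 0`. An orthogonal dual basis makes each `v i` a multiple of `w i`, so
the `v i` are orthogonal too.
-/

open Metric Real Module
open scoped InnerProductSpace

section

variable {E ι : Type*} [NormedAddCommGroup E] [InnerProductSpace ℝ E]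

theorem inner_eq_zero_of_norm_sub_eq {a b c : E} (hb : ‖a - b‖ = ‖a‖) (hc : ‖a - c‖ = ‖a‖)
    (hbc : ‖a - b - c‖ = ‖a‖) : ⟪b, c⟫_ℝ = 0 := by
  have hb' := norm_sub_sq_real a b
  have hc' := norm_sub_sq_real a c
  have hbc' := norm_sub_sq_real (a - b) c
  rw [inner_sub_left] at hbc'
  rw [hb] at hb' hbc'
  rw [hc] at hc'
  rw [hbc] at hbc'
  linarith

theorem pairwise_inner_eq_zero_of_norm_sum_sub_eq [Fintype ι] [DecidableEq ι] {w : ι → E}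
    {r : ℝ} (hw : ∀ t : Finset ι, ‖∑ l, w l - (2 : ℝ) • ∑ l ∈ t, w l‖ = r) :
    Pairwise fun j k => ⟪w j, w k⟫_ℝ = 0 := by
  intro j k hjk
  have h₀ := hw ∅
  have hj := hw {j}
  have hk := hw {k}
  have hjk' := hw {j, k}
  rw [Finset.sum_empty, smul_zero, sub_zero] at h₀
  rw [Finset.sum_singleton] at hj hk
  rw [Finset.sum_pair hjk, smul_add, ← sub_sub] at hjk'
  have := inner_eq_zero_of_norm_sub_eq (hj.trans h₀.symm) (hk.trans h₀.symm)
    (hjk'.trans h₀.symm)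
  rw [real_inner_smul_left, real_inner_smul_right] at this
  linarith

variable {v : ι → E} {s : ℝ}

theorem exists_abs_inner_le_mul_norm (hmin : ∀ x ∈ sphere (0 : E) 1, ∃ i, |⟪x, v i⟫_ℝ| ≤ s)
    {x : E} (hx : x ≠ 0) : ∃ i, |⟪x, v i⟫_ℝ| ≤ s * ‖x‖ := by
  obtain ⟨i, hi⟩ := hmin (‖x‖⁻¹ • x) (by simpa using norm_smul_inv_norm (𝕜 := ℝ) hx)
  refine ⟨i, ?_⟩
  rw [real_inner_smul_left, abs_mul, abs_inv, abs_norm, inv_mul_le_iff₀ (norm_pos_iff.2 hx)] at hi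
  linarith

theorem exists_mul_norm_le_abs_inner (hmax : ∀ x ∈ sphere (0 : E) 1, ∃ i, s ≤ |⟪x, v i⟫_ℝ|)
    {x : E} (hx : x ≠ 0) : ∃ i, s * ‖x‖ ≤ |⟪x, v i⟫_ℝ| := by
  obtain ⟨i, hi⟩ := hmax (‖x‖⁻¹ • x) (by simpa using norm_smul_inv_norm (𝕜 := ℝ) hx)
  refine ⟨i, ?_⟩
  rw [real_inner_smul_left, abs_mul, abs_inv, abs_norm, le_inv_mul_iff₀ (norm_pos_iff.2 hx)] at hi
  linarith

theorem span_range_eq_top_of_exists_le_abs_inner [FiniteDimensional ℝ E] (hs : 0 < s)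
    (hmax : ∀ x ∈ sphere (0 : E) 1, ∃ i, s ≤ |⟪x, v i⟫_ℝ|) :
    Submodule.span ℝ (Set.range v) = ⊤ := by
  rw [← Submodule.orthogonal_eq_bot_iff]
  by_contra hne
  obtain ⟨x, hxv, hx⟩ := Submodule.exists_mem_ne_zero_of_ne_bot hne
  obtain ⟨i, hi⟩ := exists_mul_norm_le_abs_inner hmax hx
  rw [real_inner_comm, hxv (v i) (Submodule.subset_span (Set.mem_range_self i)), abs_zero] at hi
  exact hi.not_gt (mul_pos hs (norm_pos_iff.2 hx))

theorem mul_norm_eq_one_of_forall_abs_inner_eq_one [Nonempty ι]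
    (hmin : ∀ x ∈ sphere (0 : E) 1, ∃ i, |⟪x, v i⟫_ℝ| ≤ s)
    (hmax : ∀ x ∈ sphere (0 : E) 1, ∃ i, s ≤ |⟪x, v i⟫_ℝ|)
    {y : E} (hy : ∀ i, |⟪y, v i⟫_ℝ| = 1) : s * ‖y‖ = 1 := by
  have hy0 : y ≠ 0 := by
    rintro rfl
    simpa using hy (Classical.arbitrary ι)
  obtain ⟨i, hi⟩ := exists_abs_inner_le_mul_norm hmin hy0
  obtain ⟨j, hj⟩ := exists_mul_norm_le_abs_inner hmax hy0
  rw [hy] at hi hj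
  exact le_antisymm hj hi

end

namespace Module.Basis

variable {E ι : Type*} [NormedAddCommGroup E] [InnerProductSpace ℝ E] [FiniteDimensional ℝ E]
  (B : Basis ι ℝ E)

noncomputable def innerDual (j : ι) : E :=
  (InnerProductSpace.toDual ℝ E).symm (LinearMap.toContinuousLinearMap (B.coord j))

theorem inner_innerDual_left (j : ι) (x : E) : ⟪B.innerDual j, x⟫_ℝ = B.repr x j := by
  simp [innerDual, InnerProductSpace.toDual_symm_apply]

theorem inner_innerDual_apply [DecidableEq ι] (j i : ι) :
    ⟪B.innerDual j, B i⟫_ℝ = if i = j then 1 else 0 := by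
  rw [inner_innerDual_left, repr_self, Finsupp.single_apply]

theorem abs_inner_sum_innerDual_sub_eq_one [Fintype ι] [DecidableEq ι] (t : Finset ι) (i : ι) :
    |⟪∑ l, B.innerDual l - (2 : ℝ) • ∑ l ∈ t, B.innerDual l, B i⟫_ℝ| = 1 := by
  rw [inner_sub_left, real_inner_smul_left, sum_inner, sum_inner]
  simp only [inner_innerDual_apply, Finset.sum_ite_eq, Finset.mem_univ, if_true]
  split_ifs <;> norm_num

theorem innerDual_ne_zero [DecidableEq ι] (j : ι) : B.innerDual j ≠ 0 := by
  intro h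
  simpa [h] using B.inner_innerDual_apply j j

theorem innerDual_eq_norm_sq_smul [Fintype ι]
    (h : Pairwise fun j k => ⟪B.innerDual j, B.innerDual k⟫_ℝ = 0) (j : ι) :
    B.innerDual j = ‖B.innerDual j‖ ^ 2 • B j := by
  conv_lhs => rw [← B.sum_repr (B.innerDual j)]
  rw [Finset.sum_eq_single j, ← inner_innerDual_left, real_inner_self_eq_norm_sq]
  · intro k _ hkj
    rw [← inner_innerDual_left, h hkj, zero_smul]
  · simp

theorem pairwise_inner_eq_zero_of_pairwise_innerDual [Fintype ι]
    (h : Pairwise fun j k => ⟪B.innerDual j, B.innerDual k⟫_ℝ = 0) :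
    Pairwise fun i j => ⟪B i, B j⟫_ℝ = 0 := by
  classical
  intro i j hij
  have hw : ⟪B.innerDual i, B.innerDual j⟫_ℝ = 0 := h hij
  rw [B.innerDual_eq_norm_sq_smul h i, B.innerDual_eq_norm_sq_smul h j, real_inner_smul_left,
    real_inner_smul_right] at hw
  have hi := B.innerDual_ne_zero i
  have hj := B.innerDual_ne_zero j
  simpa [hi, hj] using hw

end Module.Basis

theorem pairwise_inner_eq_zero_of_exists_abs_inner_le_and_ge {E ι : Type*}
    [NormedAddCommGroup E] [InnerProductSpace ℝ E] [FiniteDimensional ℝ E] [Fintype ι]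
    (hcard : Fintype.card ι = finrank ℝ E) {v : ι → E} {s : ℝ} (hs : 0 < s)
    (hmin : ∀ x ∈ sphere (0 : E) 1, ∃ i, |⟪x, v i⟫_ℝ| ≤ s)
    (hmax : ∀ x ∈ sphere (0 : E) 1, ∃ i, s ≤ |⟪x, v i⟫_ℝ|) :
    Pairwise fun i j => ⟪v i, v j⟫_ℝ = 0 := by
  classical
  intro i j hij
  have : Nonempty ι := ⟨i⟩
  have hspan := (span_range_eq_top_of_exists_le_abs_inner hs hmax).ge
  let B := basisOfTopLeSpanOfCardEqFinrank v hspan hcard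
  have hB : ⇑B = v := coe_basisOfTopLeSpanOfCardEqFinrank v hspan hcard
  have hw : ∀ t : Finset ι,
      ‖∑ l, B.innerDual l - (2 : ℝ) • ∑ l ∈ t, B.innerDual l‖ = s⁻¹ := fun t =>
    eq_inv_of_mul_eq_one_right (mul_norm_eq_one_of_forall_abs_inner_eq_one hmin hmax
      (hB ▸ B.abs_inner_sum_innerDual_sub_eq_one t))
  rw [← hB]
  exact B.pairwise_inner_eq_zero_of_pairwise_innerDual
    (pairwise_inner_eq_zero_of_norm_sum_sub_eq hw) hij

theorem d_zones_cover_pairwise_orthogonal_general (d : ℕ)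
    (h : ℝ) (hh0 : 0 < h) (hhπ : h < π / 2)
    (v : Fin d → EuclideanSpace ℝ (Fin d))
    (hcover : sphere (0 : EuclideanSpace ℝ (Fin d)) 1 =
      ⋃ i, {x ∈ sphere (0 : EuclideanSpace ℝ (Fin d)) 1 |
        |(inner ℝ x (v i) : ℝ)| ≤ Real.sin h})
    (hmult : ∀ x ∈ sphere (0 : EuclideanSpace ℝ (Fin d)) 1,
      {i : Fin d | |(inner ℝ x (v i) : ℝ)| < Real.sin h}.ncard ≤ d - 1) :
    ∀ i j, i ≠ j → (inner ℝ (v i) (v j) : ℝ) = 0 := by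
  intro i j hij
  have hsin : 0 < sin h := sin_pos_of_pos_of_lt_pi hh0 (by linarith [pi_pos])
  have hmin : ∀ x ∈ sphere (0 : EuclideanSpace ℝ (Fin d)) 1, ∃ k, |⟪x, v k⟫_ℝ| ≤ sin h := by
    intro x hx
    rw [hcover] at hx
    obtain ⟨k, -, hk⟩ := Set.mem_iUnion.mp hx
    exact ⟨k, hk⟩
  have hmax : ∀ x ∈ sphere (0 : EuclideanSpace ℝ (Fin d)) 1, ∃ k, sin h ≤ |⟪x, v k⟫_ℝ| := by
    intro x hx
    by_contra! hlt
    have huniv : {k | |⟪x, v k⟫_ℝ| < sin h} = Set.univ := Set.eq_univ_of_forall hlt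
    have hcard := hmult x hx
    rw [huniv, Set.ncard_univ, Nat.card_eq_fintype_card, Fintype.card_fin] at hcard
    have hd : 0 < d := i.pos
    omega
  have hdim : Fintype.card (Fin d) = finrank ℝ (EuclideanSpace ℝ (Fin d)) := by simp
  exact pairwise_inner_eq_zero_of_exists_abs_inner_le_and_ge hdim hsin hmin hmax hij

/-- Conjecture 1, second part, for `3 ≤ d ≤ 6`. If `d` congruent zones
of half-width `h` cover `S^{d-1}` with `3 ≤ d ≤ 6`, and every point of `S^{d-1}` belongs
to the interior of at most `d - 1` of the zones, then the zones are pairwise orthogonal. -/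
theorem d_zones_cover_pairwise_orthogonal (d : ℕ) (hd3 : 3 ≤ d) (hd6 : d ≤ 6)
    (h : ℝ) (hh0 : 0 < h) (hhπ : h < π / 2)
    (v : Fin d → EuclideanSpace ℝ (Fin d)) (hv : ∀ i, ‖v i‖ = 1)
    (hcover : sphere (0 : EuclideanSpace ℝ (Fin d)) 1 =
      ⋃ i, {x ∈ sphere (0 : EuclideanSpace ℝ (Fin d)) 1 |
        |(inner ℝ x (v i) : ℝ)| ≤ Real.sin h})
    (hmult : ∀ x ∈ sphere (0 : EuclideanSpace ℝ (Fin d)) 1,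
      {i : Fin d | |(inner ℝ x (v i) : ℝ)| < Real.sin h}.ncard ≤ d - 1) :
    ∀ i j, i ≠ j → (inner ℝ (v i) (v j) : ℝ) = 0 :=
  d_zones_cover_pairwise_orthogonal_general d h hh0 hhπ v hcover hmult
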